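/- Let a ∈ ℂ and let μ denote the Möbius function. Define b̃ : ℕ → ℂ by b̃ 0 = 1, b̃ 1 = 1/2^a, and b̃ n = μ(n)/n^a - ∑_{j=0}^{n-1} μ(n+1-j) b̃ j /(n+1-j)^a for n ≥ 2. Let α̃_0 satisfy α̃_0(0) = 1 and α̃_0(n) = α̃_0(n-1) - ∑_{j=0}^{n-1} b̃ (n-j) α̃_0(j) for n ≥ 1. Then α̃_0(n) = ∑_{j=1}^{n+1} μ(j)/j^a for all n ≥ 0. -/

import Mathlib

open ArithmeticFunction
open scoped ArithmeticFunction.Moebius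

/-!
Generating functions. Put `c k = μ k / k ^ a`, so that `c 1 = 1` and `b 1 = -c 2`. With
`C = ∑ c (k + 1) Xᵏ`, `B = ∑ b n Xⁿ` and `A = ∑ α n Xⁿ`, the
recurrence for `b` says `C * B = 1 - X + X * C` and the recurrence for `α` says
`(B - X) * A = 1`. Hence `C = C * (B - X) * A = (1 - X) * A`, so `A = C / (1 - X)` and the
coefficients of `A` are the partial sums of `c (k + 1)`.
-/

namespace PowerSeries

variable {R : Type*} [CommRing R]

theorem coeff_mk_mul_mk (f g : ℕ → R) (n : ℕ) :
    coeff n (mk f * mk g) = ∑ j ∈ Finset.range (n + 1), f (n - j) * g j := by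
  rw [mul_comm, coeff_mul,
    Finset.Nat.sum_antidiagonal_eq_sum_range_succ (fun i j => coeff i (mk g) * coeff j (mk f))]
  simp only [coeff_mk, mul_comm]

theorem mk_succ_mul_mk_of_recurrence {c b : ℕ → R} (hc1 : c 1 = 1) (hb0 : b 0 = 1)
    (hb1 : b 1 = -c 2)
    (hbn : ∀ n, 2 ≤ n → b n = c n - ∑ j ∈ Finset.range n, c (n + 1 - j) * b j) :
    mk (fun k => c (k + 1)) * mk b = 1 - X + X * mk (fun k => c (k + 1)) := by
  ext n
  rw [coeff_mk_mul_mk]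
  rcases n with _ | _ | n
  · simp [hc1, hb0]
  · simp [Finset.sum_range_succ, hc1, hb0, hb1, coeff_X]
  · have hshift : ∀ j ∈ Finset.range (n + 3), c (n + 2 - j + 1) * b j = c (n + 3 - j) * b j := by
      intro j hj
      rw [Finset.mem_range] at hj
      rw [show n + 2 - j + 1 = n + 3 - j by omega]
    rw [Finset.sum_congr rfl hshift, Finset.sum_range_succ, hbn (n + 2) (by omega)]
    simp [coeff_X, hc1]

theorem mk_sub_X_mul_mk_of_recurrence {b α : ℕ → R} (hb0 : b 0 = 1) (hα0 : α 0 = 1)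
    (hα : ∀ n, 1 ≤ n → α n = α (n - 1) - ∑ j ∈ Finset.range n, b (n - j) * α j) :
    (mk b - X) * mk α = 1 := by
  ext n
  rw [sub_mul, map_sub, coeff_mk_mul_mk]
  rcases n with _ | n
  · simp [hb0, hα0]
  · rw [coeff_succ_X_mul, Finset.sum_range_succ, hα (n + 1) (by omega)]
    simp [hb0]

theorem eq_sum_range_of_recurrences {c b α : ℕ → R} (hc1 : c 1 = 1) (hb0 : b 0 = 1)
    (hb1 : b 1 = -c 2)
    (hbn : ∀ n, 2 ≤ n → b n = c n - ∑ j ∈ Finset.range n, c (n + 1 - j) * b j)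
    (hα0 : α 0 = 1)
    (hα : ∀ n, 1 ≤ n → α n = α (n - 1) - ∑ j ∈ Finset.range n, b (n - j) * α j) (n : ℕ) :
    α n = ∑ j ∈ Finset.range (n + 1), c (j + 1) := by
  have hC := mk_succ_mul_mk_of_recurrence hc1 hb0 hb1 hbn
  have hA := mk_sub_X_mul_mk_of_recurrence hb0 hα0 hα
  have hG := mk_one_mul_one_sub_eq_one R
  have hAC : mk α = mk 1 * mk (fun k => c (k + 1)) := by
    linear_combination (-mk α) * hG - mk 1 * mk α * hC + mk 1 * mk (fun k => c (k + 1)) * hA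
  simpa [coeff_mk_mul_mk] using congrArg (coeff n) hAC

end PowerSeries

theorem stmt_13 (a : ℂ) (b : ℕ → ℂ)
    (hb0 : b 0 = 1) (hb1 : b 1 = 1 / (2 : ℂ) ^ a)
    (hbn : ∀ n : ℕ, 2 ≤ n →
      b n = (μ n : ℂ) / (n : ℂ) ^ a
        - ∑ j ∈ Finset.range n, (μ (n + 1 - j) : ℂ) * b j / ((n + 1 - j : ℕ) : ℂ) ^ a)
    (α : ℕ → ℂ) (hα0 : α 0 = 1)
    (hα : ∀ n : ℕ, 1 ≤ n →
      α n = α (n - 1) - ∑ j ∈ Finset.range n, b (n - j) * α j) :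
    ∀ n : ℕ, α n = ∑ j ∈ Finset.Icc 1 (n + 1), (μ j : ℂ) / (j : ℂ) ^ a := by
  set c : ℕ → ℂ := fun k => (μ k : ℂ) / (k : ℂ) ^ a
  have hc1 : c 1 = 1 := by simp [c]
  have hb1' : b 1 = -c 2 := by
    simp [c, hb1, moebius_apply_prime Nat.prime_two, neg_div]
  have hbn' : ∀ n, 2 ≤ n → b n = c n - ∑ j ∈ Finset.range n, c (n + 1 - j) * b j := by
    intro n hn
    simp only [hbn n hn, c, div_mul_eq_mul_div]
  intro n
  rw [PowerSeries.eq_sum_range_of_recurrences hc1 hb0 hb1' hbn' hα0 hα n, Finset.range_eq_Ico,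
    Finset.sum_Ico_add' c]
  rfl
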